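/- Eigenvector centrality of specialized matrices: let M and M̂ be as in the single-component specialization construction, with all blocks U, Z, Y_1,…,Y_y, W_1,…,W_w having nonnegative entries, and suppose M is irreducible, i.e. for every pair of indices p, q there exists k ≥ 1 with (M^k)_{pq} > 0. Let ρ = ρ(M) and let u be a vector with strictly positive entries satisfying M u = ρ u (an eigencentrality vector). Then: (a) ρ is not a root of the characteristic polynomial of Z; (b) there exists a vector v with M̂ v = ρ v such that v_B = u_B; (c) for every (i,j) ∈ P, v_{(i,j)} = (ρI − Z)^{−1} W_j v_B, so copies of Z with the same incoming block W_j have equal components of v; and (d) for each fixed i ∈ {1,…,y}, Σ_{j=1}^{w} v_{(i,j)} = u_C, where u_C is the restriction of u to the C-block; moreover ρ(M̂) = ρ, so v is an eigenvector of M̂ for its spectral radius. -/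

import Mathlib

open Matrix

/-- The single-component specialization `M̂` of the block matrix `M = [[U, ΣY_i],[ΣW_j, Z]]`:
indices `B ⊕ (P × C)` with `P = Fin y × Fin w`; its `(B,B)` block is `U`, its
`(B, {(i,j)}×C)` block is `Y i`, its `({(i,j)}×C, B)` block is `W j`, its diagonal
`({(i,j)}×C, {(i,j)}×C)` blocks are `Z`, and all blocks between distinct copies are zero. -/
def specialization {l m y w : ℕ}
    (U : Matrix (Fin l) (Fin l) ℝ) (Z : Matrix (Fin m) (Fin m) ℝ)
    (Y : Fin y → Matrix (Fin l) (Fin m) ℝ) (W : Fin w → Matrix (Fin m) (Fin l) ℝ) :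
    Matrix (Fin l ⊕ ((Fin y × Fin w) × Fin m)) (Fin l ⊕ ((Fin y × Fin w) × Fin m)) ℝ :=
  fun r c =>
    match r, c with
    | Sum.inl a, Sum.inl b => U a b
    | Sum.inl a, Sum.inr ((i, _), c') => Y i a c'
    | Sum.inr ((_, j), r'), Sum.inl b => W j r' b
    | Sum.inr (p, r'), Sum.inr (q, c') => if p = q then Z r' c' else 0

/-- The original block matrix `M = [[U, Y],[W, Z]]` with `Y = ΣY_i`, `W = ΣW_j`. -/
def origMatrix {l m y w : ℕ}
    (U : Matrix (Fin l) (Fin l) ℝ) (Z : Matrix (Fin m) (Fin m) ℝ)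
    (Y : Fin y → Matrix (Fin l) (Fin m) ℝ) (W : Fin w → Matrix (Fin m) (Fin l) ℝ) :
    Matrix (Fin l ⊕ Fin m) (Fin l ⊕ Fin m) ℝ :=
  Matrix.fromBlocks U (∑ i, Y i) (∑ j, W j) Z

/-- The spectral radius of a square real matrix: the maximum of `|λ|` over the complex
roots `λ` of its characteristic polynomial (and `0` if there are none). -/
noncomputable def specRad {n : Type*} [Fintype n] [DecidableEq n]
    (A : Matrix n n ℝ) : ℝ :=
  (((Matrix.charpoly (A.map Complex.ofReal)).roots).map (fun z : ℂ => ‖z‖)).fold max 0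

/-!
If `Z x = ρ x` with `x ≠ 0`, the vector `ξ = (0, |x|)` satisfies `ρ ξ ≤ M ξ`. For an irreducible
nonnegative `M` with a positive eigenvector `u` for `ρ`, every such `ξ` is a multiple of `u`
(the gap `t u - ξ`, with `t` the largest ratio `ξ / u`, is sub-invariant and vanishes somewhere,
so irreducibility spreads the zero everywhere); this is absurd for a nonzero vector vanishing on
`B`. Hence `ρ I - Z` is invertible, and the copies `v_{(i,j)} = (ρ I - Z)⁻¹ W_j u_B` sum over `j` to
`(ρ I - Z)⁻¹ W u_B = u_C` by the `C`-rows of `M u = ρ u`: this is exactly what the `B`-rows of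
`M̂ v = ρ v` require, while the copy rows hold by construction. So `ρ ≤ ρ(M̂)`.

Conversely, if `M̂ x = μ x` then `|μ| |x| ≤ M̂ |x|`. The `B`-rows of `M̂` only see `Σ_i Y_i` and a
copy row `(i, j)` only sees `W_j` and its own copy, so taking the maximum over `i` and then the
sum over `j` of the copies of `|x|` gives a nonnegative `ξ ≠ 0` with `|μ| ξ ≤ M ξ`. Comparing `ξ`
with the positive eigenvector `u` at the index of the largest ratio `ξ / u` gives `|μ| ≤ ρ`.
-/

namespace Matrix

variable {ι : Type*} [Fintype ι]

theorem isRoot_charpoly_iff_exists_mulVec_eq_smul [DecidableEq ι] {K : Type*} [Field K]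
    (A : Matrix ι ι K) (μ : K) : A.charpoly.IsRoot μ ↔ ∃ v ≠ 0, A *ᵥ v = μ • v := by
  rw [Polynomial.IsRoot, eval_charpoly, ← exists_mulVec_eq_zero_iff]
  simp [sub_mulVec, scalar_apply, sub_eq_zero, eq_comm, funext_iff]

theorem isRoot_charpoly_map_ofReal_iff [DecidableEq ι] (A : Matrix ι ι ℝ) (r : ℝ) :
    (A.map Complex.ofReal).charpoly.IsRoot r ↔ A.charpoly.IsRoot r := by
  have h : (A.map Complex.ofReal).charpoly.eval (r : ℂ) = A.charpoly.eval r :=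
    (A.charpoly_map Complex.ofRealHom).symm ▸ Polynomial.eval_map_apply Complex.ofRealHom r
  rw [Polynomial.IsRoot, Polynomial.IsRoot, h, Complex.ofReal_eq_zero]

theorem isUnit_det_smul_one_sub_iff [DecidableEq ι] {K : Type*} [Field K] (A : Matrix ι ι K)
    (r : K) : IsUnit (r • (1 : Matrix ι ι K) - A).det ↔ ¬ A.charpoly.IsRoot r := by
  rw [isUnit_iff_ne_zero, Polynomial.IsRoot, eval_charpoly, scalar_apply, smul_one_eq_diagonal]

theorem mulVec_add_eq_smul_iff [DecidableEq ι] {R : Type*} [CommRing R] {A : Matrix ι ι R}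
    {r : R} (hA : IsUnit (r • (1 : Matrix ι ι R) - A).det) {b x : ι → R} :
    b + A *ᵥ x = r • x ↔ x = (r • (1 : Matrix ι ι R) - A)⁻¹ *ᵥ b := by
  have hx : (r • (1 : Matrix ι ι R) - A) *ᵥ x = r • x - A *ᵥ x := by
    rw [sub_mulVec, smul_mulVec, one_mulVec]
  rw [eq_comm, ← sub_eq_iff_eq_add, ← hx]
  constructor
  · rintro h
    rw [← h, mulVec_mulVec, nonsing_inv_mul _ hA, one_mulVec]
  · rintro rfl
    rw [mulVec_mulVec, mul_nonsing_inv _ hA, one_mulVec]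

theorem mulVec_mono_of_nonneg {κ : Type*} {A : Matrix κ ι ℝ} (hA : ∀ i j, 0 ≤ A i j) :
    Monotone (A *ᵥ ·) :=
  fun _ _ h i => Finset.sum_le_sum fun j _ => mul_le_mul_of_nonneg_left (h j) (hA i j)

theorem pow_mulVec_le_pow_smul [DecidableEq ι] {A : Matrix ι ι ℝ} (hA : ∀ i j, 0 ≤ A i j)
    {r : ℝ} (hr : 0 ≤ r) {d : ι → ℝ} (h : A *ᵥ d ≤ r • d) (k : ℕ) :
    A ^ k *ᵥ d ≤ r ^ k • d := by
  induction k with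
  | zero => simp
  | succ k ih =>
    calc A ^ (k + 1) *ᵥ d = A *ᵥ (A ^ k *ᵥ d) := by rw [pow_succ', mulVec_mulVec]
      _ ≤ A *ᵥ (r ^ k • d) := mulVec_mono_of_nonneg hA ih
      _ = r ^ k • (A *ᵥ d) := mulVec_smul _ _ _
      _ ≤ r ^ k • (r • d) := smul_le_smul_of_nonneg_left h (pow_nonneg hr k)
      _ = r ^ (k + 1) • d := by rw [smul_smul, pow_succ]

theorem norm_smul_le_mulVec_norm {A : Matrix ι ι ℝ} (hA : ∀ i j, 0 ≤ A i j) {x : ι → ℂ}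
    {μ : ℂ} (h : A.map Complex.ofReal *ᵥ x = μ • x) :
    ‖μ‖ • (fun i => ‖x i‖) ≤ A *ᵥ fun i => ‖x i‖ := by
  intro i
  calc ‖μ‖ * ‖x i‖ = ‖∑ j, (A i j : ℂ) * x j‖ := by
        rw [← norm_mul, ← smul_eq_mul, ← Pi.smul_apply, ← h]; rfl
    _ ≤ ∑ j, A i j * ‖x j‖ := by
        refine (norm_sum_le _ _).trans_eq (Finset.sum_congr rfl fun j _ => ?_)
        rw [norm_mul, Complex.norm_real, Real.norm_of_nonneg (hA i j)]

theorem exists_le_smul_apply_eq [Nonempty ι] {u : ι → ℝ} (hu : ∀ i, 0 < u i) (ξ : ι → ℝ) :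
    ∃ t : ℝ, ∃ i, ξ ≤ t • u ∧ ξ i = t * u i := by
  obtain ⟨i, hi⟩ := Finite.exists_max fun j => ξ j / u j
  refine ⟨ξ i / u i, i, fun j => ?_, (div_mul_cancel₀ _ (hu i).ne').symm⟩
  simpa [div_le_iff₀ (hu j)] using hi j

theorem le_of_smul_le_mulVec {A : Matrix ι ι ℝ} (hA : ∀ i j, 0 ≤ A i j) {u : ι → ℝ}
    (hu : ∀ i, 0 < u i) {ρ : ℝ} (hAu : A *ᵥ u ≤ ρ • u) {ξ : ι → ℝ} (hξ : 0 ≤ ξ)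
    (hξ0 : ξ ≠ 0) {r : ℝ} (hr : r • ξ ≤ A *ᵥ ξ) : r ≤ ρ := by
  obtain ⟨j, hj⟩ := Function.ne_iff.1 hξ0
  have : Nonempty ι := ⟨j⟩
  obtain ⟨t, i, hle, heq⟩ := exists_le_smul_apply_eq hu ξ
  have ht : 0 < t := pos_of_mul_pos_left (((hξ j).lt_of_ne' hj).trans_le (hle j)) (hu j).le
  have key : r * (t * u i) ≤ ρ * (t * u i) := by
    calc r * (t * u i) = (r • ξ) i := by simp [heq]
      _ ≤ (A *ᵥ ξ) i := hr i
      _ ≤ (A *ᵥ (t • u)) i := mulVec_mono_of_nonneg hA hle i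
      _ = t * (A *ᵥ u) i := by rw [mulVec_smul]; rfl
      _ ≤ t * (ρ * u i) := mul_le_mul_of_nonneg_left (hAu i) ht.le
      _ = ρ * (t * u i) := by ring
  exact le_of_mul_le_mul_right key (mul_pos ht (hu i))

theorem IsIrreducible.eq_zero_of_mulVec_le_smul [DecidableEq ι] {A : Matrix ι ι ℝ}
    (hA : A.IsIrreducible) {r : ℝ} (hr : 0 ≤ r) {d : ι → ℝ} (hd : 0 ≤ d)
    (h : A *ᵥ d ≤ r • d) {i : ι} (hi : d i = 0) : d = 0 := by
  funext j
  obtain ⟨k, -, hk⟩ := (isIrreducible_iff_exists_pow_pos hA.nonneg).1 hA i j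
  have hterms : ∀ q, 0 ≤ (A ^ k) i q * d q := fun q =>
    mul_nonneg (pow_apply_nonneg hA.nonneg k i q) (hd q)
  have hle : (A ^ k *ᵥ d) i ≤ 0 := by simpa [hi] using pow_mulVec_le_pow_smul hA.nonneg hr h k i
  have hterm := (Finset.sum_eq_zero_iff_of_nonneg fun q _ => hterms q).1
    (hle.antisymm (Finset.sum_nonneg fun q _ => hterms q)) j (Finset.mem_univ j)
  exact (mul_eq_zero.1 hterm).resolve_left hk.ne'

theorem IsIrreducible.exists_eq_smul_of_smul_le_mulVec [DecidableEq ι] {A : Matrix ι ι ℝ}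
    (hA : A.IsIrreducible) {u : ι → ℝ} (hu : ∀ i, 0 < u i) {ρ : ℝ} (hρ : 0 ≤ ρ)
    (hAu : A *ᵥ u = ρ • u) {ξ : ι → ℝ} (hξ : ρ • ξ ≤ A *ᵥ ξ) : ∃ t : ℝ, ξ = t • u := by
  cases isEmpty_or_nonempty ι
  · exact ⟨0, Subsingleton.elim _ _⟩
  obtain ⟨t, i, hle, heq⟩ := exists_le_smul_apply_eq hu ξ
  refine ⟨t, (sub_eq_zero.1 (hA.eq_zero_of_mulVec_le_smul hρ (sub_nonneg.2 hle) ?_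
    (show (t • u - ξ) i = 0 by simp [heq]))).symm⟩
  calc A *ᵥ (t • u - ξ) = t • (ρ • u) - A *ᵥ ξ := by rw [mulVec_sub, mulVec_smul, hAu]
    _ ≤ t • (ρ • u) - ρ • ξ := sub_le_sub_left hξ _
    _ = ρ • (t • u - ξ) := by rw [smul_sub, smul_comm]

theorem IsIrreducible.fromBlocks_not_isRoot_charpoly {κ ν : Type*} [Fintype κ] [Fintype ν]
    [DecidableEq κ] [DecidableEq ν] [Nonempty κ] {A : Matrix κ κ ℝ} {B : Matrix κ ν ℝ}
    {C : Matrix ν κ ℝ} {D : Matrix ν ν ℝ} (hM : (fromBlocks A B C D).IsIrreducible)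
    {u : κ ⊕ ν → ℝ} (hu : ∀ i, 0 < u i) {ρ : ℝ} (hρ : 0 ≤ ρ)
    (hMu : fromBlocks A B C D *ᵥ u = ρ • u) : ¬ (D.map Complex.ofReal).charpoly.IsRoot ρ := by
  intro hroot
  obtain ⟨x, hx0, hx⟩ := (isRoot_charpoly_iff_exists_mulVec_eq_smul _ _).1 hroot
  have hxD := norm_smul_le_mulVec_norm (fun i j => hM.nonneg (.inr i) (.inr j)) hx
  rw [Complex.norm_real, Real.norm_of_nonneg hρ] at hxD
  set ξ : κ ⊕ ν → ℝ := Sum.elim 0 fun i => ‖x i‖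
  have hsub : ρ • ξ ≤ fromBlocks A B C D *ᵥ ξ := by
    rw [fromBlocks_mulVec]
    rintro (i | i)
    · simpa [ξ, mulVec, dotProduct] using Finset.sum_nonneg fun j _ =>
        mul_nonneg (hM.nonneg (.inl i) (.inr j)) (norm_nonneg (x j))
    · simpa [ξ] using hxD i
  obtain ⟨t, ht⟩ := hM.exists_eq_smul_of_smul_le_mulVec hu hρ hMu hsub
  obtain ⟨k⟩ := ‹Nonempty κ›
  have ht0 : t = 0 := by
    simpa [ξ, (hu (.inl k)).ne'] using congrFun ht (.inl k)
  exact hx0 (funext fun i => by simpa [ξ, ht0] using congrFun ht (.inr i))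

end Matrix

theorem specRad_le_iff {n : Type*} [Fintype n] [DecidableEq n] (A : Matrix n n ℝ) (r : ℝ) :
    specRad A ≤ r ↔ 0 ≤ r ∧ ∀ μ : ℂ, (A.map Complex.ofReal).charpoly.IsRoot μ → ‖μ‖ ≤ r := by
  have hfold : specRad A
      = ((A.map Complex.ofReal).charpoly.roots.map (‖·‖)).toFinset.fold max 0 id := by
    rw [specRad, Finset.fold, Multiset.map_id, Multiset.toFinset_val, Multiset.fold_dedup_idem]
  simp [hfold, Finset.fold_max_le, Polynomial.mem_roots (charpoly_monic _).ne_zero]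

theorem le_specRad_of_mulVec_eq_smul {n : Type*} [Fintype n] [DecidableEq n] {A : Matrix n n ℝ}
    {ρ : ℝ} (hρ : 0 ≤ ρ) {v : n → ℝ} (hv0 : v ≠ 0) (hv : A *ᵥ v = ρ • v) : ρ ≤ specRad A := by
  have hroot : (A.map Complex.ofReal).charpoly.IsRoot ρ :=
    (isRoot_charpoly_map_ofReal_iff A ρ).2
      ((isRoot_charpoly_iff_exists_mulVec_eq_smul A ρ).2 ⟨v, hv0, hv⟩)
  simpa [abs_of_nonneg hρ] using ((specRad_le_iff A _).1 le_rfl).2 _ hroot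

section Specialization

variable {l m y w : ℕ} {U : Matrix (Fin l) (Fin l) ℝ} {Z : Matrix (Fin m) (Fin m) ℝ}
  {Y : Fin y → Matrix (Fin l) (Fin m) ℝ} {W : Fin w → Matrix (Fin m) (Fin l) ℝ}

theorem origMatrix_nonneg (hU : ∀ a b, 0 ≤ U a b) (hZ : ∀ a b, 0 ≤ Z a b)
    (hY : ∀ i a b, 0 ≤ Y i a b) (hW : ∀ j a b, 0 ≤ W j a b) :
    ∀ p q, 0 ≤ origMatrix U Z Y W p q := by
  rintro (a | a) (b | b) <;> simp only [origMatrix, fromBlocks_apply₁₁, fromBlocks_apply₁₂,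
    fromBlocks_apply₂₁, fromBlocks_apply₂₂, Matrix.sum_apply]
  exacts [hU a b, Finset.sum_nonneg fun i _ => hY i a b, Finset.sum_nonneg fun j _ => hW j a b,
    hZ a b]

theorem specialization_nonneg (hU : ∀ a b, 0 ≤ U a b) (hZ : ∀ a b, 0 ≤ Z a b)
    (hY : ∀ i a b, 0 ≤ Y i a b) (hW : ∀ j a b, 0 ≤ W j a b) :
    ∀ p q, 0 ≤ specialization U Z Y W p q := by
  rintro (a | ⟨⟨i, j⟩, a⟩) (b | ⟨p, b⟩)
  exacts [hU a b, hY p.1 a b, hW j a b, ite_nonneg (hZ a b) le_rfl]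

theorem specialization_mulVec_inl (v : Fin l ⊕ ((Fin y × Fin w) × Fin m) → ℝ) (b : Fin l) :
    (specialization U Z Y W *ᵥ v) (.inl b)
      = (U *ᵥ (v ∘ .inl)) b + ∑ i, ∑ j, (Y i *ᵥ fun c => v (.inr ((i, j), c))) b := by
  simp [mulVec, dotProduct, Fintype.sum_sum_type, Fintype.sum_prod_type, specialization]

theorem specialization_mulVec_inr (v : Fin l ⊕ ((Fin y × Fin w) × Fin m) → ℝ) (i : Fin y)
    (j : Fin w) (c : Fin m) :
    (specialization U Z Y W *ᵥ v) (.inr ((i, j), c))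
      = (W j *ᵥ (v ∘ .inl)) c + (Z *ᵥ fun c' => v (.inr ((i, j), c'))) c := by
  simp [mulVec, dotProduct, Fintype.sum_sum_type, Fintype.sum_prod_type, specialization]

theorem specialization_mulVec_eq_smul {ρ : ℝ} {u : Fin l ⊕ Fin m → ℝ}
    (hu : origMatrix U Z Y W *ᵥ u = ρ • u) (v : Fin w → Fin m → ℝ)
    (hsum : ∑ j, v j = u ∘ .inr) (hv : ∀ j, W j *ᵥ (u ∘ .inl) + Z *ᵥ v j = ρ • v j) :
    specialization U Z Y W *ᵥ Sum.elim (u ∘ .inl) (fun q => v q.1.2 q.2)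
      = ρ • Sum.elim (u ∘ .inl) (fun q => v q.1.2 q.2) := by
  rw [origMatrix, fromBlocks_mulVec] at hu
  ext (b | ⟨⟨i, j⟩, c⟩)
  · have hrow : ∀ i, ∑ j, (Y i *ᵥ v j) b = (Y i *ᵥ (u ∘ .inr)) b := fun i => by
      rw [← hsum, mulVec_sum, Finset.sum_apply]
    simpa [specialization_mulVec_inl, hrow, sum_mulVec, Finset.sum_apply] using
      congrFun hu (.inl b)
  · simpa [specialization_mulVec_inr] using congrFun (hv j) c

noncomputable def collapseCopies (x : Fin l ⊕ ((Fin y × Fin w) × Fin m) → ℝ) : Fin l ⊕ Fin m → ℝ :=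
  Sum.elim (x ∘ .inl) (∑ j, fun c => ⨆ i, x (.inr ((i, j), c)))

theorem collapseCopies_nonneg {x : Fin l ⊕ ((Fin y × Fin w) × Fin m) → ℝ} (hx : 0 ≤ x) :
    0 ≤ collapseCopies x := by
  rintro (b | c)
  · exact hx (.inl b)
  · simpa [collapseCopies] using Finset.sum_nonneg fun j _ => Real.iSup_nonneg fun i => hx _

theorem collapseCopies_ne_zero {x : Fin l ⊕ ((Fin y × Fin w) × Fin m) → ℝ} (hx : 0 ≤ x)
    (hx0 : x ≠ 0) : collapseCopies x ≠ 0 := by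
  obtain ⟨p, hp⟩ := Function.ne_iff.1 hx0
  rcases p with b | ⟨⟨i, j⟩, c⟩
  · exact Function.ne_iff.2 ⟨.inl b, hp⟩
  · refine Function.ne_iff.2 ⟨.inr c, ne_of_gt ?_⟩
    calc (0 : ℝ) < x (.inr ((i, j), c)) := (hx _).lt_of_ne' hp
      _ ≤ ⨆ i, x (.inr ((i, j), c)) :=
        le_ciSup (Finite.bddAbove_range fun i => x (.inr ((i, j), c))) i
      _ ≤ ∑ j, ⨆ i, x (.inr ((i, j), c)) :=
        Finset.single_le_sum (f := fun j => ⨆ i, x (.inr ((i, j), c)))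
          (fun j _ => Real.iSup_nonneg fun i => hx _) (Finset.mem_univ j)
      _ = collapseCopies x (.inr c) := by simp [collapseCopies]

theorem smul_collapseCopies_le_mulVec [Nonempty (Fin y)] (hZ : ∀ a b, 0 ≤ Z a b) (hY : ∀ i a b, 0 ≤ Y i a b)
    {r : ℝ} {x : Fin l ⊕ ((Fin y × Fin w) × Fin m) → ℝ}
    (h : r • x ≤ specialization U Z Y W *ᵥ x) :
    r • collapseCopies x ≤ origMatrix U Z Y W *ᵥ collapseCopies x := by
  set η : Fin w → Fin m → ℝ := fun j c => ⨆ i, x (.inr ((i, j), c))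
  have hle : ∀ i j, (fun c => x (.inr ((i, j), c))) ≤ η j := fun i j c =>
    le_ciSup (Finite.bddAbove_range fun i => x (.inr ((i, j), c))) i
  rw [origMatrix, fromBlocks_mulVec]
  rintro (b | c)
  · calc r * x (.inl b) ≤ (specialization U Z Y W *ᵥ x) (.inl b) := h (.inl b)
      _ = (U *ᵥ (x ∘ .inl)) b + ∑ i, ∑ j, (Y i *ᵥ fun c => x (.inr ((i, j), c))) b :=
        specialization_mulVec_inl x b
      _ ≤ (U *ᵥ (x ∘ .inl)) b + ∑ i, (Y i *ᵥ ∑ j, η j) b := by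
        gcongr with i
        rw [mulVec_sum, Finset.sum_apply]
        exact Finset.sum_le_sum fun j _ => mulVec_mono_of_nonneg (hY i) (hle i j) b
      _ = _ := by simp [collapseCopies, η, sum_mulVec, Finset.sum_apply]
  · have hcopy : ∀ j, r * η j c ≤ (W j *ᵥ (x ∘ .inl)) c + (Z *ᵥ η j) c := by
      intro j
      obtain ⟨i, hi⟩ := exists_eq_ciSup_of_finite (f := fun i => x (.inr ((i, j), c)))
      calc r * η j c = r * x (.inr ((i, j), c)) := by rw [hi]
        _ ≤ (specialization U Z Y W *ᵥ x) (.inr ((i, j), c)) := h _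
        _ = (W j *ᵥ (x ∘ .inl)) c + (Z *ᵥ fun c' => x (.inr ((i, j), c'))) c :=
          specialization_mulVec_inr x i j c
        _ ≤ (W j *ᵥ (x ∘ .inl)) c + (Z *ᵥ η j) c := by
          gcongr
          exact mulVec_mono_of_nonneg hZ (hle i j) c
    calc r * (∑ j, η j) c = ∑ j, r * η j c := by rw [Finset.sum_apply, Finset.mul_sum]
      _ ≤ ∑ j, ((W j *ᵥ (x ∘ .inl)) c + (Z *ᵥ η j) c) := Finset.sum_le_sum fun j _ => hcopy j
      _ = _ := by
        simp [collapseCopies, η, Finset.sum_add_distrib, sum_mulVec, mulVec_sum, Finset.sum_apply]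

theorem specRad_specialization_le [Nonempty (Fin y)] (hU : ∀ a b, 0 ≤ U a b) (hZ : ∀ a b, 0 ≤ Z a b)
    (hY : ∀ i a b, 0 ≤ Y i a b) (hW : ∀ j a b, 0 ≤ W j a b) {ρ : ℝ} (hρ : 0 ≤ ρ)
    {u : Fin l ⊕ Fin m → ℝ} (hu : ∀ p, 0 < u p) (hMu : origMatrix U Z Y W *ᵥ u ≤ ρ • u) :
    specRad (specialization U Z Y W) ≤ ρ := by
  refine (specRad_le_iff _ _).2 ⟨hρ, fun μ hμ => ?_⟩
  obtain ⟨x, hx0, hx⟩ := (isRoot_charpoly_iff_exists_mulVec_eq_smul _ _).1 hμ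
  have hξ : 0 ≤ fun p => ‖x p‖ := fun p => norm_nonneg (x p)
  have hξ0 : (fun p => ‖x p‖) ≠ 0 := fun h => hx0 (funext fun p => norm_eq_zero.1 (congrFun h p))
  exact le_of_smul_le_mulVec (origMatrix_nonneg hU hZ hY hW) hu hMu (collapseCopies_nonneg hξ)
    (collapseCopies_ne_zero hξ hξ0) (smul_collapseCopies_le_mulVec hZ hY
      (norm_smul_le_mulVec_norm (specialization_nonneg hU hZ hY hW) hx))

end Specialization

theorem eigencentrality_of_specialization_general
    {l m y w : ℕ} (hl : 1 ≤ l) (hy : 1 ≤ y)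
    (U : Matrix (Fin l) (Fin l) ℝ) (Z : Matrix (Fin m) (Fin m) ℝ)
    (Y : Fin y → Matrix (Fin l) (Fin m) ℝ) (W : Fin w → Matrix (Fin m) (Fin l) ℝ)
    (hU : ∀ a b, 0 ≤ U a b) (hZ : ∀ a b, 0 ≤ Z a b)
    (hY : ∀ i a b, 0 ≤ Y i a b) (hW : ∀ j a b, 0 ≤ W j a b)
    (hirr : ∀ p q : Fin l ⊕ Fin m, ∃ k : ℕ, 1 ≤ k ∧ 0 < (origMatrix U Z Y W ^ k) p q)
    (u : (Fin l ⊕ Fin m) → ℝ) (hupos : ∀ p, 0 < u p)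
    (heig : (origMatrix U Z Y W).mulVec u = specRad (origMatrix U Z Y W) • u) :
    Polynomial.eval ((specRad (origMatrix U Z Y W) : ℝ) : ℂ)
        (Matrix.charpoly (Z.map Complex.ofReal)) ≠ 0
    ∧ (∃ v : (Fin l ⊕ ((Fin y × Fin w) × Fin m)) → ℝ,
        (specialization U Z Y W).mulVec v = specRad (origMatrix U Z Y W) • v
        ∧ (∀ b : Fin l, v (Sum.inl b) = u (Sum.inl b))
        ∧ (∀ (i : Fin y) (j : Fin w) (c : Fin m),
            v (Sum.inr ((i, j), c))
              = (((specRad (origMatrix U Z Y W) • (1 : Matrix (Fin m) (Fin m) ℝ) - Z)⁻¹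
                  * W j).mulVec (fun b => v (Sum.inl b))) c)
        ∧ (∀ (i i' : Fin y) (j : Fin w) (c : Fin m),
            v (Sum.inr ((i, j), c)) = v (Sum.inr ((i', j), c)))
        ∧ (∀ (i : Fin y) (c : Fin m),
            ∑ j : Fin w, v (Sum.inr ((i, j), c)) = u (Sum.inr c)))
    ∧ specRad (specialization U Z Y W) = specRad (origMatrix U Z Y W) := by
  set ρ := specRad (origMatrix U Z Y W)
  have : Nonempty (Fin l) := ⟨⟨0, hl⟩⟩
  have : Nonempty (Fin y) := ⟨⟨0, hy⟩⟩
  have hρ : 0 ≤ ρ := ((specRad_le_iff _ ρ).1 le_rfl).1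
  have hM : (origMatrix U Z Y W).IsIrreducible :=
    (isIrreducible_iff_exists_pow_pos (origMatrix_nonneg hU hZ hY hW)).2 hirr
  have hZρ := hM.fromBlocks_not_isRoot_charpoly hupos hρ heig
  have hdet : IsUnit (ρ • (1 : Matrix (Fin m) (Fin m) ℝ) - Z).det :=
    (isUnit_det_smul_one_sub_iff Z ρ).2 ((isRoot_charpoly_map_ofReal_iff Z ρ).not.1 hZρ)
  set v : Fin w → Fin m → ℝ := fun j => ((ρ • 1 - Z)⁻¹ * W j) *ᵥ (u ∘ .inl)
  have hv : ∀ j, W j *ᵥ (u ∘ .inl) + Z *ᵥ v j = ρ • v j := fun j =>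
    (mulVec_add_eq_smul_iff hdet).2 (mulVec_mulVec _ _ _).symm
  have hsum : ∑ j, v j = u ∘ .inr := by
    have hC : (∑ j, W j) *ᵥ (u ∘ .inl) + Z *ᵥ (u ∘ .inr) = ρ • (u ∘ .inr) := by
      rw [origMatrix, fromBlocks_mulVec] at heig
      exact funext fun c => by simpa using congrFun heig (.inr c)
    rw [(mulVec_add_eq_smul_iff hdet).1 hC, mulVec_mulVec, Matrix.mul_sum, sum_mulVec]
  have heigv := specialization_mulVec_eq_smul heig v hsum hv
  refine ⟨hZρ, ⟨_, heigv, fun _ => rfl, fun _ _ _ => rfl, fun _ _ _ _ => rfl,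
    fun i c => by simpa using congrFun hsum c⟩, ?_⟩
  refine (specRad_specialization_le hU hZ hY hW hρ hupos heig.le).antisymm
    (le_specRad_of_mulVec_eq_smul hρ ?_ heigv)
  exact Function.ne_iff.2 ⟨.inl (Classical.arbitrary _), (hupos _).ne'⟩

/-- eigenvector centrality of specialized matrices.  If the nonnegative block
matrix `M` is irreducible, `ρ = ρ(M)`, and `u > 0` is an eigencentrality vector of `M`,
then (a) `ρ` is not an eigenvalue of `Z`; (b) there is `v` with `M̂ v = ρ v` and
`v_B = u_B`; (c) `v_{(i,j)} = (ρI − Z)⁻¹ W_j v_B` (so copies with the same incoming block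
carry equal components); (d) for each `i`, `Σ_j v_{(i,j)} = u_C`; moreover
`ρ(M̂) = ρ(M)`, so `v` is an eigenvector of `M̂` for its spectral radius. -/
theorem eigencentrality_of_specialization
    {l m y w : ℕ} (hl : 1 ≤ l) (hm : 1 ≤ m) (hy : 1 ≤ y) (hw : 1 ≤ w)
    (U : Matrix (Fin l) (Fin l) ℝ) (Z : Matrix (Fin m) (Fin m) ℝ)
    (Y : Fin y → Matrix (Fin l) (Fin m) ℝ) (W : Fin w → Matrix (Fin m) (Fin l) ℝ)
    (hU : ∀ a b, 0 ≤ U a b) (hZ : ∀ a b, 0 ≤ Z a b)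
    (hY : ∀ i a b, 0 ≤ Y i a b) (hW : ∀ j a b, 0 ≤ W j a b)
    (hirr : ∀ p q : Fin l ⊕ Fin m, ∃ k : ℕ, 1 ≤ k ∧ 0 < (origMatrix U Z Y W ^ k) p q)
    (u : (Fin l ⊕ Fin m) → ℝ) (hupos : ∀ p, 0 < u p)
    (heig : (origMatrix U Z Y W).mulVec u = specRad (origMatrix U Z Y W) • u) :
    Polynomial.eval ((specRad (origMatrix U Z Y W) : ℝ) : ℂ)
        (Matrix.charpoly (Z.map Complex.ofReal)) ≠ 0
    ∧ (∃ v : (Fin l ⊕ ((Fin y × Fin w) × Fin m)) → ℝ,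
        (specialization U Z Y W).mulVec v = specRad (origMatrix U Z Y W) • v
        ∧ (∀ b : Fin l, v (Sum.inl b) = u (Sum.inl b))
        ∧ (∀ (i : Fin y) (j : Fin w) (c : Fin m),
            v (Sum.inr ((i, j), c))
              = (((specRad (origMatrix U Z Y W) • (1 : Matrix (Fin m) (Fin m) ℝ) - Z)⁻¹
                  * W j).mulVec (fun b => v (Sum.inl b))) c)
        ∧ (∀ (i i' : Fin y) (j : Fin w) (c : Fin m),
            v (Sum.inr ((i, j), c)) = v (Sum.inr ((i', j), c)))
        ∧ (∀ (i : Fin y) (c : Fin m),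
            ∑ j : Fin w, v (Sum.inr ((i, j), c)) = u (Sum.inr c)))
    ∧ specRad (specialization U Z Y W) = specRad (origMatrix U Z Y W) :=
  eigencentrality_of_specialization_general hl hy U Z Y W hU hZ hY hW hirr u hupos heig
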